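/- arXiv:2603.10348 — 2 statements merged into one kernel-verified Lean document; each statement's English description precedes it below -/
import Mathlib

section
/- Let K ≥ 2, θ > 0, β > 0, ε ≥ 0, and let π : Fin K → ℝ with π_k > 0 for all k and Σ_k π_k = 1, and define p_k(π) = (θ·π_k^{-β} + ε) / Σ_{j=1}^{K} (θ·π_j^{-β} + ε). If index k satisfies π_k ≥ π_j for all j and π_k > 1/K, then p_k(π) < π_k (so dπ_k/dt = p_k(π) - π_k < 0); dually, if π_k ≤ π_j for all j and π_k < 1/K, then p_k(π) > π_k. Hence the drift pushes the largest over-represented group down and the smallest under-represented group up. -/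
/-!
Write `w j = θ π_j^{-β} + ε`, a positive weight that is strictly decreasing in `π_j`.
A largest group `k` has the smallest weight, so `w_k = ∑_j π_j w_k ≤ ∑_j π_k w_j = π_k ∑_j w_j`,
with strict inequality as soon as some `π_j < π_k`, which `π_k > 1/K = ∑_j π_j / K` guarantees.
The smallest group is handled by exchanging the roles of `π` and `w`.
-/

open Finset Set

section Rearrangement

variable {ι : Type*} [Fintype ι]

theorem mul_sum_lt_mul_sum_of_forall_le {a b : ι → ℝ} (ha : ∀ j, 0 ≤ a j) (hb : ∀ j, 0 < b j)
    {k : ι} (hak : ∀ j, a k ≤ a j) (hbk : ∀ j, b j ≤ b k) (hstrict : ∃ j, a k < a j) :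
    a k * ∑ j, b j < b k * ∑ j, a j := by
  obtain ⟨j₀, hj₀⟩ := hstrict
  rw [mul_sum, mul_sum]
  refine sum_lt_sum (fun j _ => ?_) ⟨j₀, mem_univ _, ?_⟩
  · calc a k * b j ≤ a j * b j := mul_le_mul_of_nonneg_right (hak j) (hb j).le
      _ ≤ b k * a j := by rw [mul_comm (b k)]; exact mul_le_mul_of_nonneg_left (hbk j) (ha j)
  · calc a k * b j₀ < a j₀ * b j₀ := mul_lt_mul_of_pos_right hj₀ (hb j₀)
      _ ≤ b k * a j₀ := by rw [mul_comm (b k)]; exact mul_le_mul_of_nonneg_left (hbk j₀) (ha j₀)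

theorem exists_lt_of_inv_card_lt {π : ι → ℝ} (hsum : ∑ j, π j = 1) {k : ι}
    (hk : 1 / Fintype.card ι < π k) : ∃ j, π j < π k := by
  have hcard : (0 : ℝ) < Fintype.card ι := Nat.cast_pos.mpr (Fintype.card_pos_iff.mpr ⟨k⟩)
  obtain ⟨j, -, hj⟩ := exists_lt_of_sum_lt (s := univ) (f := π) (g := fun _ => π k) <| by
    rw [hsum, sum_const, card_univ, nsmul_eq_mul]
    rwa [div_lt_iff₀' hcard] at hk
  exact ⟨j, hj⟩

theorem exists_gt_of_lt_inv_card {π : ι → ℝ} (hsum : ∑ j, π j = 1) {k : ι}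
    (hk : π k < 1 / Fintype.card ι) : ∃ j, π k < π j := by
  have hcard : (0 : ℝ) < Fintype.card ι := Nat.cast_pos.mpr (Fintype.card_pos_iff.mpr ⟨k⟩)
  obtain ⟨j, -, hj⟩ := exists_lt_of_sum_lt (s := univ) (f := fun _ => π k) (g := π) <| by
    rw [hsum, sum_const, card_univ, nsmul_eq_mul]
    rwa [lt_div_iff₀' hcard] at hk
  exact ⟨j, hj⟩

end Rearrangement

section PowerWeight

variable {θ β ε : ℝ}

theorem mul_rpow_neg_add_pos (hθ : 0 < θ) (hε : 0 ≤ ε) {x : ℝ} (hx : 0 < x) :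
    0 < θ * x ^ (-β) + ε :=
  add_pos_of_pos_of_nonneg (mul_pos hθ (Real.rpow_pos_of_pos hx _)) hε

theorem strictAntiOn_mul_rpow_neg_add (hθ : 0 < θ) (hβ : 0 < β) :
    StrictAntiOn (fun x : ℝ => θ * x ^ (-β) + ε) (Ioi 0) := fun _ hx _ _ hxy =>
  add_lt_add_left
    (mul_lt_mul_of_pos_left (Real.rpow_lt_rpow_of_neg hx hxy (neg_neg_of_pos hβ)) hθ) _

end PowerWeight

theorem drift_pushes_toward_uniform_general (K : ℕ) (θ β ε : ℝ)
    (hθ : 0 < θ) (hβ : 0 < β) (hε : 0 ≤ ε)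
    (π : Fin K → ℝ) (hπ : ∀ k, 0 < π k) (hsum : ∑ k : Fin K, π k = 1) (k : Fin K) :
    ((∀ j : Fin K, π j ≤ π k) → 1 / K < π k →
        (θ * π k ^ (-β) + ε) / (∑ j : Fin K, (θ * π j ^ (-β) + ε)) < π k) ∧
    ((∀ j : Fin K, π k ≤ π j) → π k < 1 / K →
        π k < (θ * π k ^ (-β) + ε) / (∑ j : Fin K, (θ * π j ^ (-β) + ε))) := by
  set w : Fin K → ℝ := fun j => θ * π j ^ (-β) + ε
  have hw_pos : ∀ j, 0 < w j := fun j => mul_rpow_neg_add_pos hθ hε (hπ j)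
  have hw_anti := strictAntiOn_mul_rpow_neg_add (ε := ε) hθ hβ
  have hw_le : ∀ i j, π i ≤ π j → w j ≤ w i := fun i j h => hw_anti.antitoneOn (hπ i) (hπ j) h
  have hw_lt : ∀ i j, π i < π j → w j < w i := fun i j h => hw_anti (hπ i) (hπ j) h
  have hw_sum : 0 < ∑ j, w j := sum_pos (fun j _ => hw_pos j) ⟨k, mem_univ k⟩
  constructor
  · intro hmax hover
    obtain ⟨j, hj⟩ := exists_lt_of_inv_card_lt hsum (by simpa using hover)
    have key := mul_sum_lt_mul_sum_of_forall_le (fun j => (hw_pos j).le) hπ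
      (fun j => hw_le j k (hmax j)) hmax ⟨j, hw_lt j k hj⟩
    rw [hsum, mul_one] at key
    exact (div_lt_iff₀ hw_sum).mpr key
  · intro hmin hunder
    obtain ⟨j, hj⟩ := exists_gt_of_lt_inv_card hsum (by simpa using hunder)
    have key := mul_sum_lt_mul_sum_of_forall_le (fun j => (hπ j).le) hw_pos
      hmin (fun j => hw_le k j (hmin j)) ⟨j, hj⟩
    rw [hsum, mul_one] at key
    exact (lt_div_iff₀ hw_sum).mpr key

theorem drift_pushes_toward_uniform (K : ℕ) (hK : 2 ≤ K) (θ β ε : ℝ)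
    (hθ : 0 < θ) (hβ : 0 < β) (hε : 0 ≤ ε)
    (π : Fin K → ℝ) (hπ : ∀ k, 0 < π k) (hsum : ∑ k : Fin K, π k = 1) (k : Fin K) :
    ((∀ j : Fin K, π j ≤ π k) → 1 / K < π k →
        (θ * π k ^ (-β) + ε) / (∑ j : Fin K, (θ * π j ^ (-β) + ε)) < π k) ∧
    ((∀ j : Fin K, π k ≤ π j) → π k < 1 / K →
        π k < (θ * π k ^ (-β) + ε) / (∑ j : Fin K, (θ * π j ^ (-β) + ε))) :=
  drift_pushes_toward_uniform_general K θ β ε hθ hβ hε π hπ hsum k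
end

section
/- Let K ≥ 1, θ > 0, β > 0, ε > 0, and N₀ ≥ 1. Define p_k(π) = (θ·π_k^{-β} + ε)/Σ_{j=1}^{K}(θ·π_j^{-β} + ε), and let the sequence π(t) in ℝ^K evolve by π_k(t+1) = π_k(t) + (p_k(π(t)) - π_k(t))/(N₀ + t + 1), starting from any π(0) with π_k(0) > 0 for all k and Σ_k π_k(0) = 1. Then for every k, π_k(t) → 1/K as t → ∞: under symmetric bias the group proportions converge to the uniform distribution. -/
/-!
Under symmetric bias the choice probabilities are an antitone function of the current
proportions, so in each step the difference of two proportions and the difference of their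
choice probabilities have opposite signs. Mixing them with weights `1 - 1/M` and `1/M`,
`M = N₀ + t + 1`, therefore gives `|Δ(t+1)| ≤ max ((1 - 1/M) |Δ(t)|, 1/M)`, and by induction
every pairwise difference of proportions is at most `N₀ / (N₀ + t)`. Since the proportions
sum to `1`, each of them is then within `N₀ / (N₀ + t)` of `1/K`.
-/

open Filter Topology

lemma abs_add_le_max_abs_abs_of_mul_nonpos {α : Type*} [Ring α] [LinearOrder α]
    [IsStrictOrderedRing α] {u v : α} (h : u * v ≤ 0) : |u + v| ≤ max |u| |v| := by
  rcases mul_nonpos_iff.1 h with ⟨hu, hv⟩ | ⟨hu, hv⟩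
  · rw [max_comm]
    exact abs_le_max_abs_abs (le_add_of_nonneg_left hu) (add_le_of_nonpos_right hv)
  · exact abs_le_max_abs_abs (le_add_of_nonneg_right hv) (add_le_of_nonpos_left hu)

section Simplex

variable {ι : Type*} [Fintype ι]

def posSimplex (ι : Type*) [Fintype ι] : Set (ι → ℝ) :=
  {x | (∀ k, 0 < x k) ∧ ∑ k, x k = 1}

lemma posSimplex_subset_stdSimplex : posSimplex ι ⊆ stdSimplex ℝ ι :=
  fun _ hx => ⟨fun k => (hx.1 k).le, hx.2⟩

lemma convex_posSimplex : Convex ℝ (posSimplex ι) := by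
  refine fun x hx y hy a b ha hb hab => ⟨fun k => ?_, ?_⟩
  · exact convex_Ioi (0 : ℝ) (hx.1 k) (hy.1 k) ha hb hab
  · simpa [Finset.sum_add_distrib, ← Finset.mul_sum, hx.2, hy.2] using hab

lemma abs_sub_le_one_of_mem_stdSimplex {x : ι → ℝ} (hx : x ∈ stdSimplex ℝ ι) (k j : ι) :
    |x k - x j| ≤ 1 :=
  abs_sub_le_of_nonneg_of_le (hx.1 k) (mem_Icc_of_mem_stdSimplex hx k).2
    (hx.1 j) (mem_Icc_of_mem_stdSimplex hx j).2

-- Some coordinate lies below the mean `1 / card ι` and some lies above it.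
lemma abs_sub_inv_card_le {x : ι → ℝ} (hx : ∑ j, x j = 1) {δ : ℝ} {k : ι}
    (h : ∀ j, |x k - x j| ≤ δ) : |x k - (Fintype.card ι : ℝ)⁻¹| ≤ δ := by
  have : Nonempty ι := ⟨k⟩
  have hne : (Finset.univ : Finset ι).Nonempty := Finset.univ_nonempty
  have hmean : ∑ _j : ι, (Fintype.card ι : ℝ)⁻¹ = 1 := by
    rw [Finset.sum_const, Finset.card_univ, nsmul_eq_mul,
      mul_inv_cancel₀ (Nat.cast_ne_zero.2 Fintype.card_ne_zero)]
  obtain ⟨lo, -, hlo⟩ := Finset.exists_le_of_sum_le hne (hx.trans hmean.symm).le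
  obtain ⟨hi, -, hhi⟩ := Finset.exists_le_of_sum_le hne (hmean.trans hx.symm).le
  rw [abs_sub_le_iff]
  constructor
  · linarith [le_of_abs_le (h lo)]
  · linarith [neg_le_of_abs_le (h hi)]

end Simplex

section MeanField

variable {ι : Type*}

lemma abs_sub_add_smul_sub_le_max {x q : ι → ℝ} (hq : Antivary q x) {a : ℝ} (ha₀ : 0 ≤ a)
    (ha₁ : a ≤ 1) (k j : ι) :
    |(x + a • (q - x)) k - (x + a • (q - x)) j| ≤
      max ((1 - a) * |x k - x j|) (a * |q k - q j|) := by
  have hmix : (x + a • (q - x)) k - (x + a • (q - x)) j =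
      (1 - a) * (x k - x j) + a * (q k - q j) := by
    simp only [Pi.add_apply, Pi.smul_apply, Pi.sub_apply, smul_eq_mul]
    ring
  have hsign : (1 - a) * (x k - x j) * (a * (q k - q j)) ≤ 0 := by
    have := hq.sub_mul_sub_nonpos j k
    have : 0 ≤ (1 - a) * a := mul_nonneg (by linarith) ha₀
    nlinarith
  rw [hmix]
  refine (abs_add_le_max_abs_abs_of_mul_nonpos hsign).trans_eq ?_
  rw [abs_mul, abs_mul, abs_of_nonneg (by linarith : 0 ≤ 1 - a), abs_of_nonneg ha₀]

variable [Fintype ι] {f : (ι → ℝ) → ι → ℝ} {N₀ : ℝ} {x : ℕ → ι → ℝ}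

lemma mem_posSimplex_of_meanField (hf : ∀ y ∈ posSimplex ι, f y ∈ posSimplex ι)
    (hN₀ : 0 ≤ N₀) (hx₀ : x 0 ∈ posSimplex ι)
    (hx : ∀ t : ℕ, x (t + 1) = x t + (N₀ + t + 1)⁻¹ • (f (x t) - x t)) (t : ℕ) :
    x t ∈ posSimplex ι := by
  induction t with
  | zero => exact hx₀
  | succ t ih =>
    have hM : 1 ≤ N₀ + t + 1 := by linarith [t.cast_nonneg (α := ℝ)]
    rw [hx t]
    exact convex_posSimplex.add_smul_sub_mem ih (hf _ ih)
      ⟨inv_nonneg.2 (by linarith), inv_le_one_of_one_le₀ hM⟩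

lemma abs_sub_le_of_meanField (hf : ∀ y ∈ posSimplex ι, f y ∈ posSimplex ι)
    (hanti : ∀ y ∈ posSimplex ι, Antivary (f y) y) (hN₀ : 1 ≤ N₀)
    (hx₀ : x 0 ∈ posSimplex ι)
    (hx : ∀ t : ℕ, x (t + 1) = x t + (N₀ + t + 1)⁻¹ • (f (x t) - x t)) (t : ℕ) (k j : ι) :
    |x t k - x t j| ≤ N₀ / (N₀ + t) := by
  induction t generalizing k j with
  | zero =>
    rw [Nat.cast_zero, add_zero, div_self (by linarith)]
    exact abs_sub_le_one_of_mem_stdSimplex (posSimplex_subset_stdSimplex hx₀) k j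
  | succ t ih =>
    have hmem := mem_posSimplex_of_meanField hf (by linarith) hx₀ hx t
    set M : ℝ := N₀ + t + 1 with hM
    have hMpos : 0 < M := by linarith [t.cast_nonneg (α := ℝ)]
    have hM₁ : M⁻¹ ≤ 1 := inv_le_one_of_one_le₀ (by linarith [t.cast_nonneg (α := ℝ)])
    have hq := abs_sub_le_one_of_mem_stdSimplex (posSimplex_subset_stdSimplex (hf _ hmem)) k j
    rw [hx t, show N₀ + ((t + 1 : ℕ) : ℝ) = M by push_cast; ring]
    refine (abs_sub_add_smul_sub_le_max (hanti _ hmem) (inv_nonneg.2 hMpos.le) hM₁ k j).trans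
      (max_le ?_ ?_)
    · calc (1 - M⁻¹) * |x t k - x t j| ≤ (1 - M⁻¹) * (N₀ / (N₀ + t)) :=
            mul_le_mul_of_nonneg_left (ih k j) (by linarith)
        _ = N₀ / M := by
            rw [hM]
            field_simp
            ring
    · calc M⁻¹ * |f (x t) k - f (x t) j| ≤ M⁻¹ * N₀ :=
            mul_le_mul_of_nonneg_left (hq.trans hN₀) (inv_nonneg.2 hMpos.le)
        _ = N₀ / M := inv_mul_eq_div M N₀

theorem tendsto_inv_card_of_meanField (hf : ∀ y ∈ posSimplex ι, f y ∈ posSimplex ι)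
    (hanti : ∀ y ∈ posSimplex ι, Antivary (f y) y) (hN₀ : 1 ≤ N₀)
    (hx₀ : x 0 ∈ posSimplex ι)
    (hx : ∀ t : ℕ, x (t + 1) = x t + (N₀ + t + 1)⁻¹ • (f (x t) - x t)) (k : ι) :
    Tendsto (fun t => x t k) atTop (𝓝 (Fintype.card ι : ℝ)⁻¹) := by
  have hbound : ∀ t : ℕ, |x t k - (Fintype.card ι : ℝ)⁻¹| ≤ N₀ / (N₀ + t) := fun t =>
    abs_sub_inv_card_le (mem_posSimplex_of_meanField hf (by linarith) hx₀ hx t).2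
      (abs_sub_le_of_meanField hf hanti hN₀ hx₀ hx t k)
  have hzero : Tendsto (fun t : ℕ => N₀ / (N₀ + t)) atTop (𝓝 0) :=
    tendsto_const_nhds.div_atTop
      (tendsto_atTop_add_const_left _ _ tendsto_natCast_atTop_atTop)
  exact tendsto_sub_nhds_zero_iff.1 (squeeze_zero_norm hbound hzero)

end MeanField

section InversePreference

variable {ι : Type*} [Fintype ι]

noncomputable def inversePreferenceChoice (θ β ε : ℝ) (x : ι → ℝ) : ι → ℝ :=
  fun k => (θ * x k ^ (-β) + ε) / ∑ j, (θ * x j ^ (-β) + ε)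

variable {θ β ε : ℝ} {x : ι → ℝ}

lemma inversePreferenceChoice_mem_posSimplex [Nonempty ι] (hθ : 0 ≤ θ) (hε : 0 < ε)
    (hx : ∀ k, 0 ≤ x k) : inversePreferenceChoice θ β ε x ∈ posSimplex ι := by
  have hweight : ∀ k, 0 < θ * x k ^ (-β) + ε := fun k =>
    add_pos_of_nonneg_of_pos (mul_nonneg hθ (Real.rpow_nonneg (hx k) _)) hε
  have htotal : 0 < ∑ j, (θ * x j ^ (-β) + ε) :=
    Finset.sum_pos (fun j _ => hweight j) Finset.univ_nonempty
  exact ⟨fun k => div_pos (hweight k) htotal,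
    by simp only [inversePreferenceChoice]; rw [← Finset.sum_div, div_self htotal.ne']⟩

lemma antivary_inversePreferenceChoice (hθ : 0 ≤ θ) (hβ : 0 ≤ β) (hε : 0 ≤ ε)
    (hx : ∀ k, 0 < x k) : Antivary (inversePreferenceChoice θ β ε x) x := by
  have htotal : 0 ≤ ∑ j, (θ * x j ^ (-β) + ε) := Finset.sum_nonneg fun j _ =>
    add_nonneg (mul_nonneg hθ (Real.rpow_nonneg (hx j).le _)) hε
  intro i j hij
  refine div_le_div_of_nonneg_right (add_le_add_left ?_ ε) htotal
  exact mul_le_mul_of_nonneg_left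
    (Real.rpow_le_rpow_of_nonpos (hx i) hij.le (neg_nonpos.2 hβ)) hθ

end InversePreference

theorem symmetric_bias_converges_to_uniform_general (K : ℕ) (θ β ε N₀ : ℝ)
    (hθ : 0 < θ) (hβ : 0 < β) (hε : 0 < ε) (hN₀ : 1 ≤ N₀)
    (π : ℕ → Fin K → ℝ)
    (hπ0pos : ∀ k, 0 < π 0 k) (hπ0sum : ∑ k : Fin K, π 0 k = 1)
    (hrec : ∀ t : ℕ, ∀ k : Fin K,
      π (t + 1) k = π t k +
        ((θ * π t k ^ (-β) + ε) / (∑ j : Fin K, (θ * π t j ^ (-β) + ε)) - π t k) /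
          (N₀ + t + 1)) :
    ∀ k : Fin K, Tendsto (fun t : ℕ => π t k) atTop (nhds (1 / K)) := by
  intro k
  have : Nonempty (Fin K) := ⟨k⟩
  have hstep : ∀ t : ℕ, π (t + 1) =
      π t + (N₀ + t + 1)⁻¹ • (inversePreferenceChoice θ β ε (π t) - π t) := fun t =>
    funext fun i => by
      rw [hrec t i]
      simp only [inversePreferenceChoice, Pi.add_apply, Pi.smul_apply, Pi.sub_apply, smul_eq_mul]
      ring
  simpa using tendsto_inv_card_of_meanField
    (fun y hy => inversePreferenceChoice_mem_posSimplex hθ.le hε fun i => (hy.1 i).le)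
    (fun y hy => antivary_inversePreferenceChoice hθ.le hβ.le hε.le hy.1)
    hN₀ ⟨hπ0pos, hπ0sum⟩ hstep k

theorem symmetric_bias_converges_to_uniform (K : ℕ) (hK : 1 ≤ K) (θ β ε N₀ : ℝ)
    (hθ : 0 < θ) (hβ : 0 < β) (hε : 0 < ε) (hN₀ : 1 ≤ N₀)
    (π : ℕ → Fin K → ℝ)
    (hπ0pos : ∀ k, 0 < π 0 k) (hπ0sum : ∑ k : Fin K, π 0 k = 1)
    (hrec : ∀ t : ℕ, ∀ k : Fin K,
      π (t + 1) k = π t k +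
        ((θ * π t k ^ (-β) + ε) / (∑ j : Fin K, (θ * π t j ^ (-β) + ε)) - π t k) /
          (N₀ + t + 1)) :
    ∀ k : Fin K, Tendsto (fun t : ℕ => π t k) atTop (nhds (1 / K)) :=
  symmetric_bias_converges_to_uniform_general K θ β ε N₀ hθ hβ hε hN₀ π hπ0pos hπ0sum hrec
end
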